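/- Under the same setup (g₀ finitely discrete with J support points on bounded Θ ⊆ ℝ, M := sup_{θ∈Θ}|θ−θ₀|, Δ_g := max_{1≤k≤2J}|m_{k,g}−m_{k,g₀}|), the sharper bound |m_{k,g} − m_{k,g₀}| ≤ (k−2J)(M+1)^{2J(k−2J)+1} Δ_g holds for all integers k > 2J. -/
import Mathlib

open Polynomial

lemma l1_step (p : Polynomial ℝ) (b : ℝ) (N : ℕ) (hN : p.natDegree ≤ N) :
    ∑ i ∈ Finset.range (N + 2), |(p * (X - C b)).coeff i|
      ≤ (1 + |b|) * ∑ i ∈ Finset.range (N + 1), |p.coeff i| := by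
  have h0 : (p * (X - C b)).coeff 0 = -(p.coeff 0 * b) := by
    simp [Polynomial.mul_coeff_zero]
  have hsucc : ∀ a : ℕ, (p * (X - C b)).coeff (a + 1) = p.coeff a - p.coeff (a + 1) * b :=
    fun a => Polynomial.coeff_mul_X_sub_C
  have htop : p.coeff (N + 1) = 0 := Polynomial.coeff_eq_zero_of_natDegree_lt (by omega)
  rw [show N + 2 = (N + 1) + 1 from rfl, Finset.sum_range_succ']
  have hsum1 : ∑ i ∈ Finset.range (N + 1), |(p * (X - C b)).coeff (i + 1)|
      ≤ ∑ i ∈ Finset.range (N + 1), (|p.coeff i| + |b| * |p.coeff (i + 1)|) := by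
    apply Finset.sum_le_sum
    intro i _
    rw [hsucc i]
    calc |p.coeff i - p.coeff (i + 1) * b| ≤ |p.coeff i| + |p.coeff (i + 1) * b| :=
          abs_sub _ _
      _ = |p.coeff i| + |b| * |p.coeff (i + 1)| := by rw [abs_mul]; ring
  have hshift : ∑ i ∈ Finset.range (N + 1), |p.coeff (i + 1)|
      = ∑ i ∈ Finset.range (N + 1), |p.coeff i| - |p.coeff 0| := by
    have e1 : ∑ i ∈ Finset.range (N + 1), |p.coeff (i + 1)|
        = ∑ i ∈ Finset.range N, |p.coeff (i + 1)| := by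
      rw [Finset.sum_range_succ, htop, abs_zero, add_zero]
    have e2 : ∑ i ∈ Finset.range (N + 1), |p.coeff i|
        = ∑ i ∈ Finset.range N, |p.coeff (i + 1)| + |p.coeff 0| :=
      Finset.sum_range_succ' _ N
    rw [e1, e2]; ring
  rw [Finset.sum_add_distrib, ← Finset.mul_sum] at hsum1
  rw [h0, abs_neg, abs_mul]
  have hb := abs_nonneg b
  have h00 := abs_nonneg (p.coeff 0)
  nlinarith [hsum1, hshift]

lemma l1_multiset (M : ℝ) (hM0 : 0 ≤ M) (t : Multiset ℝ) :
    (∀ b ∈ t, |b| ≤ M) → ∀ N, Multiset.card t ≤ N →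
      ∑ i ∈ Finset.range (N + 1), |((t.map fun b => X - C b).prod).coeff i|
        ≤ (1 + M) ^ Multiset.card t := by
  induction t using Multiset.induction with
  | empty =>
      intro _ N _
      simp only [Multiset.map_zero, Multiset.prod_zero, Multiset.card_zero, pow_zero]
      have : ∀ i ∈ Finset.range (N + 1), |(1 : Polynomial ℝ).coeff i|
          = if i = 0 then (1:ℝ) else 0 := by
        intro i _
        rw [Polynomial.coeff_one]
        split <;> simp
      rw [Finset.sum_congr rfl this, Finset.sum_ite_eq' (Finset.range (N+1)) 0 (fun _ => (1:ℝ))]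
      simp
  | cons b t ih =>
      intro hb N hN
      simp only [Multiset.card_cons] at hN ⊢
      obtain ⟨N', rfl⟩ : ∃ N', N = N' + 1 := ⟨N - 1, by omega⟩
      have hdeg : ((t.map fun b => X - C b).prod).natDegree = Multiset.card t :=
        Polynomial.natDegree_multiset_prod_X_sub_C_eq_card t
      have hprod : ((b ::ₘ t).map fun b => X - C b).prod
          = (t.map fun b => X - C b).prod * (X - C b) := by
        rw [Multiset.map_cons, Multiset.prod_cons, mul_comm]
      rw [hprod]
      have hstep := l1_step ((t.map fun b => X - C b).prod) b (Multiset.card t)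
        (le_of_eq hdeg)
      have hN' : Multiset.card t ≤ N' := by omega
      have hih := ih (fun x hx => hb x (Multiset.mem_cons_of_mem hx)) (Multiset.card t) le_rfl
      have hbM : |b| ≤ M := hb b (Multiset.mem_cons_self b t)
      -- need sum over range (N'+2) ; hstep gives over range (card t + 2)
      have hmono : ∑ i ∈ Finset.range (Multiset.card t + 2), |(((t.map fun b => X - C b).prod) * (X - C b)).coeff i|
          = ∑ i ∈ Finset.range (N' + 2), |(((t.map fun b => X - C b).prod) * (X - C b)).coeff i| := by
        apply Finset.sum_subset
        · intro x hx; simp only [Finset.mem_range] at *; omega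
        · intro x _ hx
          simp only [Finset.mem_range, not_lt] at hx
          rw [Polynomial.coeff_eq_zero_of_natDegree_lt, abs_zero]
          calc (((t.map fun b => X - C b).prod) * (X - C b)).natDegree
              ≤ ((t.map fun b => X - C b).prod).natDegree + (X - C b).natDegree :=
                Polynomial.natDegree_mul_le
            _ = Multiset.card t + 1 := by rw [hdeg, Polynomial.natDegree_X_sub_C]
            _ < x := by omega
      rw [show N' + 1 + 1 = N' + 2 from rfl, ← hmono]
      have hppos : (0:ℝ) ≤ (1 + M) ^ Multiset.card t :=
        pow_nonneg (by linarith) _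
      have hsum_nonneg : (0:ℝ) ≤ ∑ i ∈ Finset.range (Multiset.card t + 1),
          |((t.map fun b => X - C b).prod).coeff i| :=
        Finset.sum_nonneg fun i _ => abs_nonneg _
      calc ∑ i ∈ Finset.range (Multiset.card t + 2),
            |(((t.map fun b => X - C b).prod) * (X - C b)).coeff i|
          ≤ (1 + |b|) * ∑ i ∈ Finset.range (Multiset.card t + 1),
            |((t.map fun b => X - C b).prod).coeff i| := hstep
        _ ≤ (1 + M) * (1 + M) ^ Multiset.card t := by
            apply mul_le_mul (by linarith) hih hsum_nonneg (by linarith)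
        _ = (1 + M) ^ (Multiset.card t + 1) := (pow_succ' _ _).symm

lemma nat_exp1 (J n : ℕ) (hJ : 1 ≤ J) (hn : 1 ≤ n) : n + 2 * J ≤ 2 * J * n + 1 := by
  obtain ⟨p, rfl⟩ := Nat.exists_eq_add_of_le hn
  have h1 : p ≤ 2 * J * p := Nat.le_mul_of_pos_left p (by omega)
  have h2 : 2 * J * (1 + p) = 2 * J + 2 * J * p := by ring
  linarith

lemma nat_exp2 (J n : ℕ) (hn : 1 ≤ n) : 2 * J + (2 * J * (n - 1) + 1) = 2 * J * n + 1 := by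
  obtain ⟨p, rfl⟩ := Nat.exists_eq_add_of_le hn
  have h : 1 + p - 1 = p := by omega
  rw [h]; ring

open MeasureTheory

set_option maxHeartbeats 1000000

theorem stmt_1 (Θ : Set ℝ) (hΘ : Bornology.IsBounded Θ)
    (g g₀ : Measure ℝ) [IsProbabilityMeasure g] [IsProbabilityMeasure g₀]
    (hg : g Θᶜ = 0)
    (J : ℕ) (hJ : 1 ≤ J)
    (S : Finset ℝ) (hScard : S.card = J) (hSΘ : ↑S ⊆ Θ)
    (hg₀S : g₀ (↑S : Set ℝ)ᶜ = 0) (hatoms : ∀ θ ∈ S, g₀ {θ} ≠ 0)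
    (θ₀ : ℝ) (hθ₀ : θ₀ ∈ Θ)
    (M : ℝ) (hM : M = sSup ((fun θ => |θ - θ₀|) '' Θ))
    (m : ℕ → Measure ℝ → ℝ) (hm : ∀ k ν, m k ν = ∫ θ, (θ - θ₀) ^ k ∂ν)
    (Δ : ℝ)
    (hΔ : Δ = (Finset.Icc 1 (2 * J)).sup' (Finset.nonempty_Icc.mpr (by omega))
      (fun k => |m k g - m k g₀|))
    (k : ℕ) (hk : 2 * J < k) :
    |m k g - m k g₀| ≤ ((k : ℝ) - 2 * J) * (M + 1) ^ (2 * J * (k - 2 * J) + 1) * Δ := by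
  -- basic facts about M
  obtain ⟨R, hR⟩ := hΘ.subset_closedBall θ₀
  have hbdd : BddAbove ((fun θ => |θ - θ₀|) '' Θ) := by
    refine ⟨R, ?_⟩
    rintro _ ⟨θ, hθ, rfl⟩
    have := hR hθ
    rwa [Metric.mem_closedBall, Real.dist_eq] at this
  have hMb : ∀ θ ∈ Θ, |θ - θ₀| ≤ M := by
    intro θ hθ; rw [hM]; exact le_csSup hbdd ⟨θ, hθ, rfl⟩
  have hM0 : 0 ≤ M := by
    have := hMb θ₀ hθ₀; simpa using this
  -- a.e. membership
  have haeg : ∀ᵐ θ ∂g, θ ∈ Θ := MeasureTheory.mem_ae_iff.mpr hg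
  have hg₀Θ : g₀ Θᶜ = 0 :=
    measure_mono_null (Set.compl_subset_compl.mpr hSΘ) hg₀S
  have haeg₀ : ∀ᵐ θ ∂g₀, θ ∈ Θ := MeasureTheory.mem_ae_iff.mpr hg₀Θ
  have haeS : ∀ᵐ θ ∂g₀, θ ∈ (↑S : Set ℝ) := MeasureTheory.mem_ae_iff.mpr hg₀S
  -- integrability of the power functions
  have hInt : ∀ (n : ℕ) (ν : Measure ℝ), IsProbabilityMeasure ν →
      (∀ᵐ θ ∂ν, θ ∈ Θ) → Integrable (fun θ => (θ - θ₀) ^ n) ν := by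
    intro n ν hprob hae
    haveI := hprob
    refine ⟨Continuous.aestronglyMeasurable (by continuity), ?_⟩
    apply MeasureTheory.HasFiniteIntegral.of_bounded (C := M ^ n)
    filter_upwards [hae] with θ hθ
    rw [Real.norm_eq_abs, abs_pow]
    exact pow_le_pow_left₀ (abs_nonneg _) (hMb θ hθ) n
  -- the polynomial
  obtain ⟨u, hu⟩ : ∃ u : Multiset ℝ, u = S.val.map (fun s => s - θ₀) := ⟨_, rfl⟩
  obtain ⟨t, ht⟩ : ∃ t : Multiset ℝ, t = u + u := ⟨_, rfl⟩
  obtain ⟨Q, hQdef⟩ : ∃ q : Polynomial ℝ, q = (t.map fun b => Polynomial.X - Polynomial.C b).prod := ⟨_, rfl⟩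
  have hcardu : Multiset.card u = J := by
    rw [hu, Multiset.card_map]; exact hScard
  have hcardt : Multiset.card t = 2 * J := by
    rw [ht, Multiset.card_add, hcardu]; ring
  have htM : ∀ b ∈ t, |b| ≤ M := by
    intro b hb
    rw [ht, Multiset.mem_add] at hb
    have hb' : b ∈ u := by tauto
    rw [hu, Multiset.mem_map] at hb'
    obtain ⟨s, hs, rfl⟩ := hb'
    exact hMb s (hSΘ hs)
  have hdeg : Q.natDegree = 2 * J := by
    rw [hQdef, Polynomial.natDegree_multiset_prod_X_sub_C_eq_card, hcardt]
  have hmonic : Q.Monic := by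
    rw [hQdef]
    exact Polynomial.monic_multiset_prod_of_monic _ _ fun b _ => Polynomial.monic_X_sub_C b
  have hQtop : Q.coeff (2 * J) = 1 := by rw [← hdeg]; exact hmonic.coeff_natDegree
  obtain ⟨P, hPdef⟩ : ∃ p : Polynomial ℝ, p = (u.map fun b => Polynomial.X - Polynomial.C b).prod := ⟨_, rfl⟩
  have hQP : Q = P * P := by rw [hQdef, hPdef, ht, Multiset.map_add, Multiset.prod_add]
  have hQnonneg : ∀ y : ℝ, 0 ≤ Q.eval y := by
    intro y; rw [hQP, Polynomial.eval_mul]; exact mul_self_nonneg _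
  have hQzero : ∀ s ∈ S, Q.eval (s - θ₀) = 0 := by
    intro s hs
    rw [hQP, Polynomial.eval_mul]
    have hP0 : P.eval (s - θ₀) = 0 := by
      rw [hPdef, Polynomial.eval_multiset_prod, Multiset.map_map]
      apply Multiset.prod_eq_zero
      refine Multiset.mem_map.mpr ⟨s - θ₀, ?_, by simp⟩
      rw [hu]
      exact Multiset.mem_map.mpr ⟨s, Finset.mem_val.mpr hs, rfl⟩
    rw [hP0, zero_mul]
  -- coefficient bounds
  have hA : ∑ i ∈ Finset.range (2 * J + 1), |Q.coeff i| ≤ (1 + M) ^ (2 * J) := by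
    have h := l1_multiset M hM0 t htM (2 * J) (le_of_eq hcardt)
    rw [hcardt, ← hQdef] at h
    exact h
  have hA' : ∑ i ∈ Finset.range (2 * J), |Q.coeff i| ≤ (1 + M) ^ (2 * J) - 1 := by
    have h := Finset.sum_range_succ (fun i => |Q.coeff i|) (2 * J)
    rw [hQtop, abs_one] at h
    linarith [hA, h.symm.le, h.le]
  -- pointwise expansion
  have hexp : ∀ (n : ℕ) (θ : ℝ), (θ - θ₀) ^ n * Q.eval (θ - θ₀)
      = ∑ i ∈ Finset.range (2 * J + 1), Q.coeff i * (θ - θ₀) ^ (n + i) := by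
    intro n θ
    rw [Polynomial.eval_eq_sum_range' (n := 2 * J + 1) (by rw [hdeg]; omega) (θ - θ₀), Finset.mul_sum]
    exact Finset.sum_congr rfl fun i _ => by rw [pow_add]; ring
  -- integral expansion over a measure supported in Θ
  have hIQ : ∀ (n : ℕ) (ν : Measure ℝ), IsProbabilityMeasure ν →
      (∀ᵐ θ ∂ν, θ ∈ Θ) →
      ∫ θ, (θ - θ₀) ^ n * Q.eval (θ - θ₀) ∂ν
        = ∑ i ∈ Finset.range (2 * J + 1), Q.coeff i * ∫ θ, (θ - θ₀) ^ (n + i) ∂ν := by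
    intro n ν hprob hae
    have hfe : (fun θ => (θ - θ₀) ^ n * Q.eval (θ - θ₀))
        = fun θ => ∑ i ∈ Finset.range (2 * J + 1), Q.coeff i * (θ - θ₀) ^ (n + i) :=
      funext fun θ => hexp n θ
    rw [hfe, MeasureTheory.integral_finset_sum]
    · exact Finset.sum_congr rfl fun i _ => MeasureTheory.integral_const_mul _ _
    · exact fun i _ => (hInt (n + i) ν hprob hae).const_mul _
  -- integrability of the polynomial expression w.r.t. g
  have hIntQ : ∀ n : ℕ, Integrable (fun θ => (θ - θ₀) ^ n * Q.eval (θ - θ₀)) g := by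
    intro n
    have hfe : (fun θ => (θ - θ₀) ^ n * Q.eval (θ - θ₀))
        = fun θ => ∑ i ∈ Finset.range (2 * J + 1), Q.coeff i * (θ - θ₀) ^ (n + i) :=
      funext fun θ => hexp n θ
    rw [hfe]
    exact MeasureTheory.integrable_finset_sum _
      fun i _ => (hInt (n + i) g ‹_› haeg).const_mul _
  -- key identity
  have hEkey : ∀ n : ℕ,
      ∫ θ, (θ - θ₀) ^ n * Q.eval (θ - θ₀) ∂g
        = ∑ i ∈ Finset.range (2 * J + 1), Q.coeff i * (m (n + i) g - m (n + i) g₀) := by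
    intro n
    have h0 : ∫ θ, (θ - θ₀) ^ n * Q.eval (θ - θ₀) ∂g₀ = 0 := by
      apply MeasureTheory.integral_eq_zero_of_ae
      filter_upwards [haeS] with θ hθ
      have hz : Q.eval (θ - θ₀) = 0 := hQzero θ hθ
      simp [hz]
    have h1 := hIQ n g ‹_› haeg
    have h2 := hIQ n g₀ ‹_› haeg₀
    rw [h0] at h2
    have h3 : ∑ i ∈ Finset.range (2 * J + 1), Q.coeff i * m (n + i) g₀ = 0 := by
      simp_rw [hm]; exact h2.symm
    have h4 : ∀ i ∈ Finset.range (2 * J + 1),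
        Q.coeff i * (m (n + i) g - m (n + i) g₀)
          = Q.coeff i * m (n + i) g - Q.coeff i * m (n + i) g₀ :=
      fun i _ => mul_sub _ _ _
    rw [Finset.sum_congr rfl h4, Finset.sum_sub_distrib, h3, sub_zero]
    simp_rw [hm]
    exact h1
  -- basic Δ facts
  have hDΔ : ∀ i, 1 ≤ i → i ≤ 2 * J → |m i g - m i g₀| ≤ Δ := by
    intro i h1 h2
    rw [hΔ]
    exact Finset.le_sup' (fun k => |m k g - m k g₀|) (Finset.mem_Icc.mpr ⟨h1, h2⟩)
  have hΔ0 : 0 ≤ Δ := le_trans (abs_nonneg _) (hDΔ 1 le_rfl (by omega))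
  have hD0 : m 0 g - m 0 g₀ = 0 := by
    rw [hm, hm]
    simp
  have hDΔ' : ∀ i, i ≤ 2 * J → |m i g - m i g₀| ≤ Δ := by
    intro i h2
    rcases Nat.eq_zero_or_pos i with h | h
    · rw [h, hD0, abs_zero]; exact hΔ0
    · exact hDΔ i h h2
  have hpow1 : (1:ℝ) ≤ 1 + M := by linarith
  have hpow_nonneg : ∀ e : ℕ, (0:ℝ) ≤ (1 + M) ^ e := fun e => pow_nonneg (by linarith) e
  have hpow_ge1 : ∀ e : ℕ, (1:ℝ) ≤ (1 + M) ^ e := fun e => one_le_pow₀ hpow1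
  -- bound on E 0
  have hE0le : ∫ θ, (θ - θ₀) ^ 0 * Q.eval (θ - θ₀) ∂g ≤ (1 + M) ^ (2 * J) * Δ := by
    rw [hEkey 0]
    calc ∑ i ∈ Finset.range (2 * J + 1), Q.coeff i * (m (0 + i) g - m (0 + i) g₀)
        ≤ ∑ i ∈ Finset.range (2 * J + 1), |Q.coeff i| * Δ := by
          apply Finset.sum_le_sum
          intro i hi
          have hi' : i ≤ 2 * J := by
            simp only [Finset.mem_range] at hi; omega
          calc Q.coeff i * (m (0 + i) g - m (0 + i) g₀)
              ≤ |Q.coeff i * (m (0 + i) g - m (0 + i) g₀)| := le_abs_self _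
            _ = |Q.coeff i| * |m (0 + i) g - m (0 + i) g₀| := abs_mul _ _
            _ ≤ |Q.coeff i| * Δ := by
                apply mul_le_mul_of_nonneg_left _ (abs_nonneg _)
                rw [Nat.zero_add]
                exact hDΔ' i hi'
      _ = (∑ i ∈ Finset.range (2 * J + 1), |Q.coeff i|) * Δ := (Finset.sum_mul _ _ _).symm
      _ ≤ (1 + M) ^ (2 * J) * Δ := mul_le_mul_of_nonneg_right hA hΔ0
  have hE0nonneg : 0 ≤ ∫ θ, (θ - θ₀) ^ 0 * Q.eval (θ - θ₀) ∂g :=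
    MeasureTheory.integral_nonneg fun θ => by
      rw [pow_zero, one_mul]; exact hQnonneg _
  -- bound on E n
  have hEn : ∀ n : ℕ, |∫ θ, (θ - θ₀) ^ n * Q.eval (θ - θ₀) ∂g|
      ≤ M ^ n * ((1 + M) ^ (2 * J) * Δ) := by
    intro n
    have h1 : |∫ θ, (θ - θ₀) ^ n * Q.eval (θ - θ₀) ∂g|
        ≤ ∫ θ, |(θ - θ₀) ^ n * Q.eval (θ - θ₀)| ∂g := by
      have h := MeasureTheory.norm_integral_le_integral_norm
          (μ := g) (fun θ => (θ - θ₀) ^ n * Q.eval (θ - θ₀))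
      simp only [Real.norm_eq_abs] at h
      exact h
    have h2 : ∫ θ, |(θ - θ₀) ^ n * Q.eval (θ - θ₀)| ∂g
        ≤ ∫ θ, M ^ n * ((θ - θ₀) ^ 0 * Q.eval (θ - θ₀)) ∂g := by
      apply MeasureTheory.integral_mono_ae (hIntQ n).abs ((hIntQ 0).const_mul _)
      filter_upwards [haeg] with θ hθ
      rw [abs_mul, abs_pow, pow_zero, one_mul, abs_of_nonneg (hQnonneg _)]
      exact mul_le_mul_of_nonneg_right
        (pow_le_pow_left₀ (abs_nonneg _) (hMb θ hθ) n) (hQnonneg _)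
    rw [MeasureTheory.integral_const_mul] at h2
    have hMn : (0:ℝ) ≤ M ^ n := pow_nonneg hM0 n
    have := mul_le_mul_of_nonneg_left hE0le hMn
    linarith
  -- main induction
  have main : ∀ k', 2 * J < k' →
      |m k' g - m k' g₀| ≤ ((k' : ℝ) - 2 * J) * (1 + M) ^ (2 * J * (k' - 2 * J) + 1) * Δ := by
    intro k'
    induction k' using Nat.strong_induction_on with
    | _ k' ih =>
      intro hk'
      set n := k' - 2 * J with hn
      have hn1 : 1 ≤ n := by omega
      have hkn : n + 2 * J = k' := by omega
      have hcast : ((k' : ℝ) - 2 * J) = (n : ℝ) := by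
        rw [← hkn]; push_cast; ring
      have hkey := hEkey n
      rw [Finset.sum_range_succ, hQtop, one_mul, hkn] at hkey
      have hsplit : |m k' g - m k' g₀|
          ≤ |∫ θ, (θ - θ₀) ^ n * Q.eval (θ - θ₀) ∂g|
            + |∑ i ∈ Finset.range (2 * J), Q.coeff i * (m (n + i) g - m (n + i) g₀)| := by
        have : m k' g - m k' g₀ = (∫ θ, (θ - θ₀) ^ n * Q.eval (θ - θ₀) ∂g)
            - ∑ i ∈ Finset.range (2 * J), Q.coeff i * (m (n + i) g - m (n + i) g₀) := by
          linarith [hkey]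
        rw [this]
        exact abs_sub _ _
      rcases eq_or_lt_of_le hn1 with h1 | h2
      · -- n = 1
        have hne : n = 1 := h1.symm
        have hDB : |∑ i ∈ Finset.range (2 * J), Q.coeff i * (m (n + i) g - m (n + i) g₀)|
            ≤ ((1 + M) ^ (2 * J) - 1) * Δ := by
          calc |∑ i ∈ Finset.range (2 * J), Q.coeff i * (m (n + i) g - m (n + i) g₀)|
              ≤ ∑ i ∈ Finset.range (2 * J), |Q.coeff i * (m (n + i) g - m (n + i) g₀)| :=
                Finset.abs_sum_le_sum_abs _ _
            _ ≤ ∑ i ∈ Finset.range (2 * J), |Q.coeff i| * Δ := by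
                apply Finset.sum_le_sum
                intro i hi
                rw [abs_mul]
                apply mul_le_mul_of_nonneg_left _ (abs_nonneg _)
                apply hDΔ' (n + i)
                simp only [Finset.mem_range] at hi
                omega
            _ = (∑ i ∈ Finset.range (2 * J), |Q.coeff i|) * Δ := (Finset.sum_mul _ _ _).symm
            _ ≤ ((1 + M) ^ (2 * J) - 1) * Δ := mul_le_mul_of_nonneg_right hA' hΔ0
        have hE1 := hEn n
        have hps : (1 + M) ^ (2 * J * n + 1) = (1 + M) ^ (2 * J) * (1 + M) := by
          rw [hne, mul_one, pow_succ]
        have hcastn : ((n : ℕ) : ℝ) = 1 := by rw [hne]; norm_num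
        have hMn : M ^ n = M := by rw [hne, pow_one]
        rw [hMn] at hE1
        have hgoal : M * ((1 + M) ^ (2 * J) * Δ) + ((1 + M) ^ (2 * J) - 1) * Δ
            ≤ (n : ℝ) * (1 + M) ^ (2 * J * n + 1) * Δ := by
          rw [hcastn, one_mul, hps]
          ring_nf
          nlinarith [hΔ0]
        rw [hcast]
        linarith [hsplit, hDB, hE1, hgoal]
      · -- n ≥ 2
        have hn2 : 2 ≤ n := h2
        obtain ⟨B, hB⟩ : ∃ b : ℝ, b = ((n : ℝ) - 1) * (1 + M) ^ (2 * J * (n - 1) + 1) * Δ := ⟨_, rfl⟩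
        have hBnonneg : 0 ≤ B := by
          rw [hB]
          apply mul_nonneg (mul_nonneg _ (hpow_nonneg _)) hΔ0
          have : (1:ℝ) ≤ (n:ℝ) := by exact_mod_cast hn1
          linarith
        have hDB : ∀ i, i < 2 * J → |m (n + i) g - m (n + i) g₀| ≤ B := by
          intro i hi
          rcases le_or_gt (n + i) (2 * J) with hle | hgt
          · calc |m (n + i) g - m (n + i) g₀| ≤ Δ := hDΔ' _ hle
              _ ≤ B := by
                rw [hB]
                have h1n : (2:ℝ) ≤ (n:ℝ) := by exact_mod_cast hn2
                have hc1 : (1:ℝ) ≤ ((n : ℝ) - 1) * (1 + M) ^ (2 * J * (n - 1) + 1) := by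
                  nlinarith [hpow_ge1 (2 * J * (n - 1) + 1)]
                exact le_mul_of_one_le_left hΔ0 hc1
          · have hlt : n + i < k' := by omega
            have hih := ih (n + i) hlt hgt
            have hje : (n + i) - 2 * J ≤ n - 1 := by omega
            have hic : (i : ℝ) + 1 ≤ 2 * (J : ℝ) := by exact_mod_cast hi
            have hjc : ((n + i : ℕ) : ℝ) - 2 * J ≤ (n : ℝ) - 1 := by
              push_cast
              linarith
            have hjc0 : (0:ℝ) ≤ ((n + i : ℕ) : ℝ) - 2 * J := by
              have h := (Nat.cast_le (α := ℝ)).mpr hgt.le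
              push_cast at h ⊢
              linarith
            have hpe : (1 + M) ^ (2 * J * ((n + i) - 2 * J) + 1)
                ≤ (1 + M) ^ (2 * J * (n - 1) + 1) :=
              pow_le_pow_right₀ hpow1
                (Nat.add_le_add_right (Nat.mul_le_mul_left (2 * J) hje) 1)
            calc |m (n + i) g - m (n + i) g₀|
                ≤ (((n + i : ℕ) : ℝ) - 2 * J) * (1 + M) ^ (2 * J * ((n + i) - 2 * J) + 1) * Δ := hih
              _ ≤ ((n : ℝ) - 1) * (1 + M) ^ (2 * J * (n - 1) + 1) * Δ := by
                  apply mul_le_mul_of_nonneg_right _ hΔ0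
                  apply mul_le_mul hjc hpe (hpow_nonneg _)
                  have h1n : (1:ℝ) ≤ (n:ℝ) := by exact_mod_cast hn1
                  linarith
              _ = B := hB.symm
        have hSB : |∑ i ∈ Finset.range (2 * J), Q.coeff i * (m (n + i) g - m (n + i) g₀)|
            ≤ ((1 + M) ^ (2 * J) - 1) * B := by
          calc |∑ i ∈ Finset.range (2 * J), Q.coeff i * (m (n + i) g - m (n + i) g₀)|
              ≤ ∑ i ∈ Finset.range (2 * J), |Q.coeff i * (m (n + i) g - m (n + i) g₀)| :=
                Finset.abs_sum_le_sum_abs _ _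
            _ ≤ ∑ i ∈ Finset.range (2 * J), |Q.coeff i| * B := by
                apply Finset.sum_le_sum
                intro i hi
                rw [abs_mul]
                exact mul_le_mul_of_nonneg_left
                  (hDB i (Finset.mem_range.mp hi)) (abs_nonneg _)
            _ = (∑ i ∈ Finset.range (2 * J), |Q.coeff i|) * B := (Finset.sum_mul _ _ _).symm
            _ ≤ ((1 + M) ^ (2 * J) - 1) * B := mul_le_mul_of_nonneg_right hA' hBnonneg
        have hE1 := hEn n
        -- term 1 bound
        have ht1 : M ^ n * ((1 + M) ^ (2 * J) * Δ) ≤ (1 + M) ^ (2 * J * n + 1) * Δ := by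
          have hMle : M ^ n ≤ (1 + M) ^ n := pow_le_pow_left₀ hM0 (by linarith) n
          have h1 : M ^ n * (1 + M) ^ (2 * J) ≤ (1 + M) ^ n * (1 + M) ^ (2 * J) :=
            mul_le_mul_of_nonneg_right hMle (hpow_nonneg _)
          rw [← pow_add] at h1
          have h2 : (1 + M) ^ (n + 2 * J) ≤ (1 + M) ^ (2 * J * n + 1) :=
            pow_le_pow_right₀ hpow1 (nat_exp1 J n hJ hn1)
          nlinarith [hΔ0, hpow_nonneg (n + 2 * J)]
        -- term 2 bound
        have ht2 : ((1 + M) ^ (2 * J) - 1) * B ≤ ((n : ℝ) - 1) * ((1 + M) ^ (2 * J * n + 1) * Δ) := by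
          have hpp : (1 + M) ^ (2 * J) * (1 + M) ^ (2 * J * (n - 1) + 1)
              = (1 + M) ^ (2 * J * n + 1) := by
            rw [← pow_add, nat_exp2 J n hn1]
          have hq : 0 ≤ ((n : ℝ) - 1) * (1 + M) ^ (2 * J * (n - 1) + 1) * Δ := hB ▸ hBnonneg
          rw [hB]
          calc ((1 + M) ^ (2 * J) - 1) * (((n : ℝ) - 1) * (1 + M) ^ (2 * J * (n - 1) + 1) * Δ)
              ≤ (1 + M) ^ (2 * J) * (((n : ℝ) - 1) * (1 + M) ^ (2 * J * (n - 1) + 1) * Δ) :=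
                mul_le_mul_of_nonneg_right (by linarith) hq
            _ = ((n : ℝ) - 1) * (((1 + M) ^ (2 * J) * (1 + M) ^ (2 * J * (n - 1) + 1)) * Δ) := by
                ring
            _ = ((n : ℝ) - 1) * ((1 + M) ^ (2 * J * n + 1) * Δ) := by rw [hpp]
        rw [hcast]
        have hfinal : |m k' g - m k' g₀|
            ≤ (1 + M) ^ (2 * J * n + 1) * Δ + ((n : ℝ) - 1) * ((1 + M) ^ (2 * J * n + 1) * Δ) := by
          linarith [hsplit, hSB, hE1, ht1, ht2]
        have : (1 + M) ^ (2 * J * n + 1) * Δ + ((n : ℝ) - 1) * ((1 + M) ^ (2 * J * n + 1) * Δ)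
            = (n : ℝ) * (1 + M) ^ (2 * J * n + 1) * Δ := by ring
        linarith [hfinal, this.le, this.ge]
  have := main k hk
  rw [show M + 1 = 1 + M from by ring]
  exact this
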